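/- The Induced Subgraph MCS Model is an MCS Model. Precisely: let G be the set of finite labeled graphs with vertex labels in Σ_V and edge labels in Σ_E, with isomorphic graphs identified, let ⊆ᵢ be the induced-subgraph-isomorphism relation, and let α : Σ_V → (0,∞) be a label weighting function; define s_{GVα}(g) = 0 if g is empty and s_{GVα}(g) = Σ_{v∈V} α(ℓ_V(v)) otherwise. Then ⊆ᵢ is a partial order on G, s_{GVα} satisfies (S1) and (S2), any two graphs have a nonempty finite set of common subelements (so (A1) holds), and (A2) holds: if g₁ ⊆ᵢ h and g₂ ⊆ᵢ h then there exists g₁₂ ⊆ᵢ g₁, g₂ with s_{GVα}(h) ≥ s_{GVα}(g₁) + s_{GVα}(g₂) − s_{GVα}(g₁₂). -/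
import Mathlib


/-- A finite labeled graph with vertex labels in `LV` and edge labels in `LE`.
Vertices are drawn from `ℕ`; label functions are total on `ℕ` resp. `Sym2 ℕ`
(only the values on actual vertices and edges are relevant). -/
structure LGraph (LV LE : Type) where
  verts : Finset ℕ
  edges : Finset (Sym2 ℕ)
  edges_sub : ∀ e ∈ edges, ∀ v ∈ e, v ∈ verts
  edges_nodiag : ∀ e ∈ edges, ¬ e.IsDiag
  ℓV : ℕ → LV
  ℓE : Sym2 ℕ → LE

/-- Label-preserving isomorphism of labeled graphs. -/
def LGraph.Iso {LV LE : Type} (g₁ g₂ : LGraph LV LE) : Prop :=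
  ∃ φ : ℕ → ℕ,
    Set.BijOn φ ↑g₁.verts ↑g₂.verts ∧
    (∀ u ∈ g₁.verts, ∀ v ∈ g₁.verts, (s(u, v) ∈ g₁.edges ↔ s(φ u, φ v) ∈ g₂.edges)) ∧
    (∀ v ∈ g₁.verts, g₂.ℓV (φ v) = g₁.ℓV v) ∧
    (∀ u ∈ g₁.verts, ∀ v ∈ g₁.verts, s(u, v) ∈ g₁.edges →
      g₂.ℓE s(φ u, φ v) = g₁.ℓE s(u, v))

/-- `g'` is an induced subgraph of `g`: `V' ⊆ V`, `E' = E ∩ [V']²`, with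
agreeing labels. -/
def LGraph.IsInducedSubgraph {LV LE : Type} (g' g : LGraph LV LE) : Prop :=
  g'.verts ⊆ g.verts ∧
  (∀ e : Sym2 ℕ, e ∈ g'.edges ↔ (e ∈ g.edges ∧ ∀ v ∈ e, v ∈ g'.verts)) ∧
  (∀ v ∈ g'.verts, g'.ℓV v = g.ℓV v) ∧
  (∀ e ∈ g'.edges, g'.ℓE e = g.ℓE e)

/-- `g ⊆ᵢ h` (induced subgraph isomorphism): some induced subgraph of `h` is
isomorphic to `g`. -/
def LGraph.IndSubIso {LV LE : Type} (g h : LGraph LV LE) : Prop :=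
  ∃ g'' : LGraph LV LE, LGraph.IsInducedSubgraph g'' h ∧ LGraph.Iso g'' g

/-- Weighted size `s_{GVα}` of a labeled graph (it vanishes on the empty graph,
since the sum is then empty). -/
def LGraph.sizeV {LV LE : Type} (αV : LV → ℝ) (g : LGraph LV LE) : ℝ :=
  ∑ v ∈ g.verts, αV (g.ℓV v)

namespace LGraph
variable {LV LE : Type}

lemma Iso.refl (g : LGraph LV LE) : g.Iso g :=
  ⟨id, Set.bijOn_id _, by simp, by simp, by simp⟩

lemma Iso.symm {g₁ g₂ : LGraph LV LE} (h : g₁.Iso g₂) : g₂.Iso g₁ := by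
  obtain ⟨φ, hbij, hedge, hlv, hle⟩ := h
  set ψ := Function.invFunOn φ ↑g₁.verts with hψ
  have hinv : Set.InvOn ψ φ ↑g₁.verts ↑g₂.verts := hbij.invOn_invFunOn
  have hbij' : Set.BijOn ψ ↑g₂.verts ↑g₁.verts := hbij.symm hinv.symm
  have hmem : ∀ v ∈ g₂.verts, ψ v ∈ g₁.verts := fun v hv => hbij'.mapsTo hv
  have hφψ : ∀ v ∈ g₂.verts, φ (ψ v) = v := fun v hv => hinv.2 hv
  refine ⟨ψ, hbij', fun u hu v hv => ?_, fun v hv => ?_, fun u hu v hv he => ?_⟩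
  · rw [hedge (ψ u) (hmem u hu) (ψ v) (hmem v hv), hφψ u hu, hφψ v hv]
  · rw [← hlv (ψ v) (hmem v hv), hφψ v hv]
  · have he' : s(ψ u, ψ v) ∈ g₁.edges := by
      rw [hedge (ψ u) (hmem u hu) (ψ v) (hmem v hv), hφψ u hu, hφψ v hv]; exact he
    have := hle (ψ u) (hmem u hu) (ψ v) (hmem v hv) he'
    rw [hφψ u hu, hφψ v hv] at this
    exact this.symm
  
lemma Iso.trans {g₁ g₂ g₃ : LGraph LV LE} (h12 : g₁.Iso g₂) (h23 : g₂.Iso g₃) :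
    g₁.Iso g₃ := by
  obtain ⟨φ, hbij, hedge, hlv, hle⟩ := h12
  obtain ⟨φ', hbij', hedge', hlv', hle'⟩ := h23
  have hmem : ∀ v ∈ g₁.verts, φ v ∈ g₂.verts := fun v hv => hbij.mapsTo hv
  refine ⟨φ' ∘ φ, hbij'.comp hbij, fun u hu v hv => ?_, fun v hv => ?_,
    fun u hu v hv he => ?_⟩
  · rw [hedge u hu v hv, hedge' (φ u) (hmem u hu) (φ v) (hmem v hv)]; rfl
  · simp only [Function.comp_apply]
    rw [hlv' (φ v) (hmem v hv), hlv v hv]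
  · simp only [Function.comp_apply]
    rw [hle' (φ u) (hmem u hu) (φ v) (hmem v hv) ((hedge u hu v hv).1 he),
      hle u hu v hv he]

lemma sizeV_eq_of_iso {αV : LV → ℝ} {g₁ g₂ : LGraph LV LE} (h : g₁.Iso g₂) :
    g₁.sizeV αV = g₂.sizeV αV := by
  obtain ⟨φ, hbij, -, hlv, -⟩ := h
  have himg : g₁.verts.image φ = g₂.verts := by
    apply Finset.coe_injective
    rw [Finset.coe_image, hbij.image_eq]
  unfold sizeV
  rw [← himg, Finset.sum_image (fun u hu v hv h => hbij.injOn hu hv h)]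
  exact Finset.sum_congr rfl fun v hv => by rw [hlv v hv]

lemma ind_refl (g : LGraph LV LE) : g.IsInducedSubgraph g :=
  ⟨Finset.Subset.refl _, fun e => ⟨fun he => ⟨he, g.edges_sub e he⟩, fun h => h.1⟩,
    fun _ _ => rfl, fun _ _ => rfl⟩

lemma ind_trans {a b c : LGraph LV LE} (hab : a.IsInducedSubgraph b)
    (hbc : b.IsInducedSubgraph c) : a.IsInducedSubgraph c := by
  obtain ⟨hv, he, hlv, hle⟩ := hab
  obtain ⟨hv', he', hlv', hle'⟩ := hbc
  refine ⟨hv.trans hv', fun e => ?_, fun v hv'' => ?_, fun e he'' => ?_⟩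
  · rw [he e, he' e]
    constructor
    · rintro ⟨⟨h1, -⟩, h2⟩; exact ⟨h1, h2⟩
    · rintro ⟨h1, h2⟩; exact ⟨⟨h1, fun v hv'' => hv (h2 v hv'')⟩, h2⟩
  · rw [hlv v hv'', hlv' v (hv hv'')]
  · rw [hle e he'', hle' e ((he e).1 he'').1]

/-- Restriction of `g` to a vertex set `S`. -/
noncomputable def restrict (g : LGraph LV LE) (S : Finset ℕ) : LGraph LV LE where
  verts := S ∩ g.verts
  edges := @Finset.filter _ (fun e => ∀ v ∈ e, v ∈ S ∩ g.verts) (Classical.decPred _) g.edges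
  edges_sub := fun e he v hv =>
    (@Finset.mem_filter _ (fun e => ∀ v ∈ e, v ∈ S ∩ g.verts) (Classical.decPred _) _ e
      |>.1 he).2 v hv
  edges_nodiag := fun e he => g.edges_nodiag e
    (@Finset.mem_filter _ (fun e => ∀ v ∈ e, v ∈ S ∩ g.verts) (Classical.decPred _) _ e
      |>.1 he).1
  ℓV := g.ℓV
  ℓE := g.ℓE

lemma mem_restrict_verts {g : LGraph LV LE} {S : Finset ℕ} {v : ℕ} :
    v ∈ (g.restrict S).verts ↔ v ∈ S ∧ v ∈ g.verts := Finset.mem_inter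

lemma mem_restrict_edges {g : LGraph LV LE} {S : Finset ℕ} {e : Sym2 ℕ} :
    e ∈ (g.restrict S).edges ↔ e ∈ g.edges ∧ ∀ v ∈ e, v ∈ (g.restrict S).verts :=
  @Finset.mem_filter _ (fun e => ∀ v ∈ e, v ∈ S ∩ g.verts) (Classical.decPred _) _ e

lemma restrict_ind (g : LGraph LV LE) (S : Finset ℕ) :
    (g.restrict S).IsInducedSubgraph g :=
  ⟨Finset.inter_subset_right, fun _ => mem_restrict_edges, fun _ _ => rfl, fun _ _ => rfl⟩

lemma sizeV_ind {αV : LV → ℝ} {a g : LGraph LV LE} (h : a.IsInducedSubgraph g) :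
    a.sizeV αV = ∑ v ∈ a.verts, αV (g.ℓV v) :=
  Finset.sum_congr rfl fun v hv => by rw [h.2.2.1 v hv]

lemma indSubIso_trans {g₁ g₂ g₃ : LGraph LV LE} (h12 : g₁.IndSubIso g₂)
    (h23 : g₂.IndSubIso g₃) : g₁.IndSubIso g₃ := by
  obtain ⟨a, hind_a, hiso_a⟩ := h12
  obtain ⟨b, hind_b, ⟨φ, hbij, hedge, hlv, hle⟩⟩ := h23
  -- pull back `a.verts` along φ inside `b`
  set S := @Finset.filter _ (fun v => φ v ∈ a.verts) (Classical.decPred _) b.verts with hS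
  set c := b.restrict S with hc
  have hcverts : ∀ v, v ∈ c.verts ↔ (v ∈ b.verts ∧ φ v ∈ a.verts) := by
    intro v
    rw [hc, mem_restrict_verts, hS,
      @Finset.mem_filter _ (fun v => φ v ∈ a.verts) (Classical.decPred _)]
    tauto
  have hcsub : ∀ v ∈ c.verts, v ∈ b.verts := fun v hv => ((hcverts v).1 hv).1
  have hcind : c.IsInducedSubgraph g₃ := ind_trans (b.restrict_ind S) hind_b
  refine ⟨c, hcind, Iso.trans (g₂ := a) ⟨φ, ?_, ?_, ?_, ?_⟩ hiso_a⟩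
  · -- BijOn φ c.verts a.verts
    refine ⟨fun v hv => ?_, fun u hu v hv h => hbij.injOn (hcsub u hu) (hcsub v hv) h,
      fun w hw => ?_⟩
    · exact ((hcverts v).1 hv).2
    · obtain ⟨v, hv, rfl⟩ := hbij.surjOn (hind_a.1 hw)
      exact ⟨v, (hcverts v).2 ⟨hv, hw⟩, rfl⟩
  · intro u hu v hv
    rw [hc, mem_restrict_edges, hind_a.2.1 s(φ u, φ v)]
    have h1 : (s(u,v) ∈ b.edges ↔ s(φ u, φ v) ∈ g₂.edges) :=
      hedge u (hcsub u hu) v (hcsub v hv)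
    constructor
    · rintro ⟨he, -⟩
      refine ⟨h1.1 he, ?_⟩
      intro w hw
      rw [Sym2.mem_iff] at hw
      rcases hw with rfl | rfl
      · exact ((hcverts u).1 hu).2
      · exact ((hcverts v).1 hv).2
    · rintro ⟨he, -⟩
      refine ⟨h1.2 he, ?_⟩
      intro w hw
      rw [Sym2.mem_iff] at hw
      rcases hw with rfl | rfl
      · exact hu
      · exact hv
  · intro v hv
    have := hlv v (hcsub v hv)
    rw [hind_a.2.2.1 (φ v) ((hcverts v).1 hv).2]
    exact this
  · intro u hu v hv he
    rw [hc, mem_restrict_edges] at he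
    have h1 : s(φ u, φ v) ∈ a.edges := by
      rw [hind_a.2.1]
      refine ⟨(hedge u (hcsub u hu) v (hcsub v hv)).1 he.1, ?_⟩
      intro w hw
      rw [Sym2.mem_iff] at hw
      rcases hw with rfl | rfl
      · exact ((hcverts u).1 hu).2
      · exact ((hcverts v).1 hv).2
    rw [hind_a.2.2.2 s(φ u, φ v) h1]
    exact hle u (hcsub u hu) v (hcsub v hv) he.1

lemma indSubIso_of_ind {a g : LGraph LV LE} (h : a.IsInducedSubgraph g) :
    a.IndSubIso g := ⟨a, h, Iso.refl a⟩

lemma indSubIso_of_iso {a g : LGraph LV LE} (h : g.Iso a) :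
    a.IndSubIso g := ⟨g, ind_refl g, h⟩

lemma sizeV_le_of_indSubIso {αV : LV → ℝ} (hαV : ∀ a, 0 < αV a)
    {g₁ g₂ : LGraph LV LE} (h : g₁.IndSubIso g₂) : g₁.sizeV αV ≤ g₂.sizeV αV := by
  obtain ⟨a, hind, hiso⟩ := h
  rw [← sizeV_eq_of_iso hiso, sizeV_ind hind]
  exact Finset.sum_le_sum_of_subset_of_nonneg hind.1 (fun i _ _ => (hαV _).le)

lemma iso_of_sizeV_eq {αV : LV → ℝ} (hαV : ∀ a, 0 < αV a)
    {g₁ g₂ : LGraph LV LE} (h : g₁.IndSubIso g₂)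
    (hsz : g₁.sizeV αV = g₂.sizeV αV) : g₁.Iso g₂ := by
  obtain ⟨a, hind, hiso⟩ := h
  have hveq : a.verts = g₂.verts := by
    by_contra hne
    obtain ⟨x, hx2, hx1⟩ := Finset.exists_of_ssubset (lt_of_le_of_ne hind.1 hne)
    have hlt : ∑ v ∈ a.verts, αV (g₂.ℓV v) < ∑ v ∈ g₂.verts, αV (g₂.ℓV v) :=
      Finset.sum_lt_sum_of_subset hind.1 hx2 hx1 (hαV _) (fun i _ _ => (hαV _).le)
    have h1 : g₁.sizeV αV = ∑ v ∈ a.verts, αV (g₂.ℓV v) :=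
      (sizeV_eq_of_iso hiso).symm.trans (sizeV_ind hind)
    have h2 : g₂.sizeV αV = ∑ v ∈ g₂.verts, αV (g₂.ℓV v) := rfl
    linarith
  have hiso2 : a.Iso g₂ := by
    refine ⟨id, by rw [hveq]; exact Set.bijOn_id _, fun u hu v hv => ?_,
      fun v hv => (hind.2.2.1 v hv).symm, fun u hu v hv he => (hind.2.2.2 _ he).symm⟩
    rw [hind.2.1]
    simp only [id]
    exact ⟨fun h => h.1, fun he => ⟨he, fun w hw => hveq ▸ g₂.edges_sub _ he w hw⟩⟩
  exact hiso.symm.trans hiso2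

lemma iso_of_empty {g₁ g₂ : LGraph LV LE} (h₁ : g₁.verts = ∅) (h₂ : g₂.verts = ∅) :
    g₁.Iso g₂ :=
  ⟨id, by rw [h₁, h₂]; simp, by simp [h₁], by simp [h₁], by simp [h₁]⟩

lemma restrict_empty_verts (g : LGraph LV LE) : (g.restrict ∅).verts = ∅ := by
  simp [restrict]

lemma empty_indSubIso (g₀ g : LGraph LV LE) (h₀ : g₀.verts = ∅) : g₀.IndSubIso g :=
  ⟨g.restrict ∅, g.restrict_ind ∅, iso_of_empty (g.restrict_empty_verts) h₀⟩

end LGraph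

/-- the Induced Subgraph MCS Model `(G, ⊆ᵢ, s_{GVα})` is an MCS
Model (with isomorphic graphs identified, so equality in the order axioms and
in (S2) becomes isomorphism): `⊆ᵢ` is a partial order, `s_{GVα}` satisfies
(S1) and (S2), the common subelements of any two graphs form a nonempty set
whose set of sizes is finite and has a maximum (A1), and the diamond
inequality (A2) holds. -/
theorem induced_subgraph_mcs_model_is_mcs_model (LV LE : Type)
    (αV : LV → ℝ) (hαV : ∀ a, 0 < αV a) :
    -- ⊆ᵢ is a partial order (antisymmetry up to isomorphism)
    (∀ g : LGraph LV LE, g.IndSubIso g) ∧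
    (∀ g₁ g₂ g₃ : LGraph LV LE, g₁.IndSubIso g₂ → g₂.IndSubIso g₃ → g₁.IndSubIso g₃) ∧
    (∀ g₁ g₂ : LGraph LV LE, g₁.IndSubIso g₂ → g₂.IndSubIso g₁ → g₁.Iso g₂) ∧
    -- (S1)
    (∀ g₁ g₂ : LGraph LV LE, g₁.IndSubIso g₂ →
      g₁.sizeV αV ≤ g₂.sizeV αV) ∧
    -- (S2) (up to isomorphism)
    (∀ g₁ g₂ : LGraph LV LE, g₁.IndSubIso g₂ →
      g₁.sizeV αV = g₂.sizeV αV → g₁.Iso g₂) ∧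
    -- (A1): common subelements are nonempty and their sizes form a finite set
    -- with a maximum
    (∀ g₁ g₂ : LGraph LV LE, ∃ h : LGraph LV LE, h.IndSubIso g₁ ∧ h.IndSubIso g₂) ∧
    (∀ g₁ g₂ : LGraph LV LE,
      Set.Finite {t : ℝ | ∃ h : LGraph LV LE,
        h.IndSubIso g₁ ∧ h.IndSubIso g₂ ∧ h.sizeV αV = t}) ∧
    (∀ g₁ g₂ : LGraph LV LE, ∃ m : ℝ,
      IsGreatest {t : ℝ | ∃ h : LGraph LV LE,
        h.IndSubIso g₁ ∧ h.IndSubIso g₂ ∧ h.sizeV αV = t} m) ∧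
    -- (A2)
    (∀ g₁ g₂ h : LGraph LV LE, g₁.IndSubIso h → g₂.IndSubIso h →
      ∃ g₁₂ : LGraph LV LE, g₁₂.IndSubIso g₁ ∧ g₁₂.IndSubIso g₂ ∧
        g₁.sizeV αV + g₂.sizeV αV - g₁₂.sizeV αV ≤ h.sizeV αV) := by
  have hfin : ∀ g₁ g₂ : LGraph LV LE,
      Set.Finite {t : ℝ | ∃ h : LGraph LV LE,
        h.IndSubIso g₁ ∧ h.IndSubIso g₂ ∧ h.sizeV αV = t} := by
    intro g₁ g₂
    apply Set.Finite.subset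
      (Set.Finite.image (fun S : Finset ℕ => ∑ v ∈ S, αV (g₁.ℓV v))
        (g₁.verts.powerset.finite_toSet))
    rintro t ⟨h, ⟨a, hind, hiso⟩, -, rfl⟩
    refine ⟨a.verts, Finset.mem_coe.2 (Finset.mem_powerset.2 hind.1), ?_⟩
    exact ((LGraph.sizeV_eq_of_iso hiso).symm.trans (LGraph.sizeV_ind hind)).symm
  have hnonempty : ∀ g₁ g₂ : LGraph LV LE, ∃ h : LGraph LV LE,
      h.IndSubIso g₁ ∧ h.IndSubIso g₂ := by
    intro g₁ g₂
    exact ⟨g₁.restrict ∅,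
      LGraph.empty_indSubIso _ _ (g₁.restrict_empty_verts),
      LGraph.empty_indSubIso _ _ (g₁.restrict_empty_verts)⟩
  refine ⟨fun g => ⟨g, LGraph.ind_refl g, LGraph.Iso.refl g⟩,
    fun g₁ g₂ g₃ => LGraph.indSubIso_trans,
    fun g₁ g₂ h12 h21 => LGraph.iso_of_sizeV_eq hαV h12
      (le_antisymm (LGraph.sizeV_le_of_indSubIso hαV h12)
        (LGraph.sizeV_le_of_indSubIso hαV h21)),
    fun g₁ g₂ => LGraph.sizeV_le_of_indSubIso hαV,
    fun g₁ g₂ => LGraph.iso_of_sizeV_eq hαV,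
    hnonempty, hfin, ?_, ?_⟩
  · -- greatest element
    intro g₁ g₂
    have hf := hfin g₁ g₂
    obtain ⟨h₀, h1, h2⟩ := hnonempty g₁ g₂
    have hne : hf.toFinset.Nonempty :=
      ⟨h₀.sizeV αV, hf.mem_toFinset.2 ⟨h₀, h1, h2, rfl⟩⟩
    refine ⟨hf.toFinset.max' hne, hf.mem_toFinset.1 (hf.toFinset.max'_mem hne),
      fun t ht => hf.toFinset.le_max' t (hf.mem_toFinset.2 ht)⟩
  · -- (A2)
    rintro g₁ g₂ h ⟨a₁, hi₁, hiso₁⟩ ⟨a₂, hi₂, hiso₂⟩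
    set W := a₁.verts ∩ a₂.verts with hWdef
    set g₁₂ := h.restrict W with hg₁₂
    have hW : g₁₂.verts = W :=
      Finset.inter_eq_left.2 (fun v hv => hi₁.1 (Finset.mem_inter.1 hv).1)
    have hindc : ∀ (a : LGraph LV LE), a.IsInducedSubgraph h → W ⊆ a.verts →
        g₁₂.IsInducedSubgraph a := by
      intro a hi hWa
      refine ⟨hW ▸ hWa, fun e => ?_, fun v hv => (hi.2.2.1 v (hWa (hW ▸ hv))).symm,
        fun e he => ?_⟩
      · rw [hg₁₂, LGraph.mem_restrict_edges, hi.2.1 e]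
        constructor
        · rintro ⟨he, hv⟩
          exact ⟨⟨he, fun w hw => hWa (hW ▸ hv w hw)⟩, hv⟩
        · rintro ⟨⟨he, -⟩, hv⟩; exact ⟨he, hv⟩
      · have he' : e ∈ a.edges := by
          rw [hi.2.1 e]
          rw [hg₁₂, LGraph.mem_restrict_edges] at he
          exact ⟨he.1, fun w hw => hWa (hW ▸ he.2 w hw)⟩
        exact (hi.2.2.2 e he').symm
    have hc₁ : g₁₂.IsInducedSubgraph a₁ := hindc a₁ hi₁ Finset.inter_subset_left
    have hc₂ : g₁₂.IsInducedSubgraph a₂ := hindc a₂ hi₂ Finset.inter_subset_right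
    refine ⟨g₁₂,
      LGraph.indSubIso_trans (LGraph.indSubIso_of_ind hc₁)
        (LGraph.indSubIso_of_iso hiso₁.symm),
      LGraph.indSubIso_trans (LGraph.indSubIso_of_ind hc₂)
        (LGraph.indSubIso_of_iso hiso₂.symm), ?_⟩
    have s₁ : g₁.sizeV αV = ∑ v ∈ a₁.verts, αV (h.ℓV v) :=
      (LGraph.sizeV_eq_of_iso hiso₁).symm.trans (LGraph.sizeV_ind hi₁)
    have s₂ : g₂.sizeV αV = ∑ v ∈ a₂.verts, αV (h.ℓV v) :=
      (LGraph.sizeV_eq_of_iso hiso₂).symm.trans (LGraph.sizeV_ind hi₂)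
    have s₁₂ : g₁₂.sizeV αV = ∑ v ∈ W, αV (h.ℓV v) := by
      rw [LGraph.sizeV_ind (h.restrict_ind W), hW]
    have hunion : ∑ v ∈ a₁.verts ∪ a₂.verts, αV (h.ℓV v)
        + ∑ v ∈ W, αV (h.ℓV v)
        = ∑ v ∈ a₁.verts, αV (h.ℓV v) + ∑ v ∈ a₂.verts, αV (h.ℓV v) :=
      Finset.sum_union_inter
    have hle : ∑ v ∈ a₁.verts ∪ a₂.verts, αV (h.ℓV v) ≤ h.sizeV αV :=
      Finset.sum_le_sum_of_subset_of_nonneg (Finset.union_subset hi₁.1 hi₂.1)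
        (fun i _ _ => (hαV _).le)
    linarith
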